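/- (Lemma 4.5, Hardy-type inequality) Let h : [0,∞) → ℝ be continuously differentiable with h and h' bounded and h(0) = 0. Then ∫_0^∞ h(x)² w'(x)² dx ≤ ∫_0^∞ h'(x)² w(x)² dx. -/

import Mathlib

open Real MeasureTheory

/-- The wave number `k = sqrt(b/(2ν))`. -/
noncomputable def waveK (ν b : ℝ) : ℝ := Real.sqrt (b / (2 * ν))

/-- The travelling wave profile `v(x) = (1 + exp(-k x))⁻¹`. -/
noncomputable def twProfile (ν b : ℝ) (x : ℝ) : ℝ :=
  (1 + Real.exp (-(waveK ν b) * x))⁻¹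

/-- `w = v' = k v (1 - v)`. -/
noncomputable def twW (ν b : ℝ) (x : ℝ) : ℝ :=
  waveK ν b * twProfile ν b x * (1 - twProfile ν b x)

/-!
A ground-state argument. With `k = waveK ν b`, the function `sinh (k x)` is a positive solution
of `(w² φ')' + (w')² φ = 0` on `(0, ∞)` vanishing at `0`, so its logarithmic derivative
`q = k coth (k x)` solves the Riccati equation `(w² q)' = -(w q)² - (w')²`. Hence for
`F = h² w² q` one has `(h')² w² - h² (w')² - F' = (h' w - h w q)² ≥ 0`, and integrating over
`(0, ∞)` gives the inequality, because `F` vanishes at both ends: at `0` since `|h x| ≤ C x`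
and `q x ~ 1 / x`, at infinity since `h` is bounded and `w` decays exponentially.
-/

open Set Filter Topology

theorem sub_le_integral_Ioi_of_hasDerivAt_of_le {f f' g : ℝ → ℝ} {a m : ℝ}
    (hcont : ContinuousWithinAt f (Ici a) a) (hderiv : ∀ x ∈ Ioi a, HasDerivAt f (f' x) x)
    (hg : IntegrableOn g (Ioi a)) (hle : ∀ x ∈ Ioi a, f' x ≤ g x)
    (hf : Tendsto f atTop (𝓝 m)) :
    m - f a ≤ ∫ x in Ioi a, g x := by
  have hbound : ∀ᶠ b in atTop, f b - f a ≤ ∫ x in a..b, g x := by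
    filter_upwards [eventually_gt_atTop a] with b hab
    refine intervalIntegral.sub_le_integral_of_hasDeriv_right_of_le hab.le ?_
      (fun x hx => (hderiv x hx.1).hasDerivWithinAt)
      (by rw [integrableOn_Icc_iff_integrableOn_Ioc]; exact hg.mono_set Ioc_subset_Ioi_self)
      (fun x hx => hle x hx.1)
    rintro x ⟨hax, -⟩
    rcases hax.eq_or_lt with rfl | hax
    · exact hcont.mono Icc_subset_Ici_self
    · exact (hderiv x hax).continuousAt.continuousWithinAt
  exact le_of_tendsto_of_tendsto (hf.sub_const _)
    (intervalIntegral_tendsto_integral_Ioi a hg tendsto_id) hbound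

theorem integral_sq_mul_sq_le_of_riccati {h h' u p q : ℝ → ℝ} {a : ℝ}
    (hh : ∀ x ∈ Ioi a, HasDerivAt h (h' x) x)
    (hq : ∀ x ∈ Ioi a, HasDerivAt (fun y => u y ^ 2 * q y) (-(u x * q x) ^ 2 - p x ^ 2) x)
    (ha : h a = 0)
    (hlim : Tendsto (fun x => h x ^ 2 * (u x ^ 2 * q x)) (𝓝[>] a) (𝓝 0))
    (hlim_atTop : Tendsto (fun x => h x ^ 2 * (u x ^ 2 * q x)) atTop (𝓝 0))
    (hp : IntegrableOn (fun x => h x ^ 2 * p x ^ 2) (Ioi a))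
    (hu : IntegrableOn (fun x => h' x ^ 2 * u x ^ 2) (Ioi a)) :
    ∫ x in Ioi a, h x ^ 2 * p x ^ 2 ≤ ∫ x in Ioi a, h' x ^ 2 * u x ^ 2 := by
  have hcont : ContinuousWithinAt (fun x => h x ^ 2 * (u x ^ 2 * q x)) (Ici a) a := by
    rw [← continuousWithinAt_Ioi_iff_Ici, ContinuousWithinAt, ha]
    simpa using hlim
  have hgap (x : ℝ) (_ : x ∈ Ioi a) :
      2 * h x * h' x * (u x ^ 2 * q x) + h x ^ 2 * (-(u x * q x) ^ 2 - p x ^ 2)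
        ≤ h' x ^ 2 * u x ^ 2 - h x ^ 2 * p x ^ 2 := by
    nlinarith [sq_nonneg (h' x * u x - h x * (u x * q x))]
  have key := sub_le_integral_Ioi_of_hasDerivAt_of_le hcont
    (fun x hx => ((hh x hx).pow 2).mul (hq x hx) |>.congr_deriv (by simp))
    (hu.sub hp) hgap hlim_atTop
  rw [integral_sub' hu hp, ha] at key
  linarith

theorem integrableOn_sq_mul_of_abs_le {α : Type*} [MeasurableSpace α] {μ : Measure α}
    {f g : α → ℝ} {s : Set α} {C : ℝ} (hg : IntegrableOn g s μ) (hs : MeasurableSet s)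
    (hf : AEStronglyMeasurable f (μ.restrict s)) (hC : ∀ x ∈ s, |f x| ≤ C) :
    IntegrableOn (fun x => f x ^ 2 * g x) s μ := by
  refine hg.bdd_mul (c := C ^ 2) (hf.pow 2) ?_
  filter_upwards [ae_restrict_mem hs] with x hx
  rw [norm_pow, norm_eq_abs]
  exact pow_le_pow_left₀ (abs_nonneg _) (hC x hx) 2

noncomputable def logDerivSinh (k x : ℝ) : ℝ := k * cosh (k * x) / sinh (k * x)

lemma hasDerivAt_logDerivSinh {k x : ℝ} (hkx : k * x ≠ 0) :
    HasDerivAt (logDerivSinh k) (k ^ 2 - logDerivSinh k x ^ 2) x := by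
  have hlin : HasDerivAt (fun y => k * y) k x := by simpa using (hasDerivAt_id x).const_mul k
  refine (((hlin.cosh).const_mul k).div hlin.sinh (sinh_ne_zero.2 hkx)).congr_deriv ?_
  rw [logDerivSinh]
  field_simp

section Profile

variable (ν b : ℝ)

lemma waveK_nonneg : 0 ≤ waveK ν b := sqrt_nonneg _

lemma twW_eq (x : ℝ) :
    twW ν b x = waveK ν b * exp (-waveK ν b * x) / (1 + exp (-waveK ν b * x)) ^ 2 := by
  have : 0 < 1 + exp (-waveK ν b * x) := by positivity
  rw [twW, twProfile]
  field_simp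
  ring

lemma hasDerivAt_twProfile (x : ℝ) : HasDerivAt (twProfile ν b) (twW ν b x) x := by
  have hE : HasDerivAt (fun y => 1 + exp (-waveK ν b * y))
      (exp (-waveK ν b * x) * -waveK ν b) x := by
    simpa using ((hasDerivAt_id x).const_mul (-waveK ν b)).exp.const_add 1
  refine (hE.inv (by positivity)).congr_deriv ?_
  rw [twW_eq]
  field_simp

lemma hasDerivAt_twW (x : ℝ) :
    HasDerivAt (twW ν b) (waveK ν b * (1 - 2 * twProfile ν b x) * twW ν b x) x := by
  have hv := hasDerivAt_twProfile ν b x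
  refine ((hv.const_mul (waveK ν b)).mul (hv.const_sub 1)).congr_deriv ?_
  rw [twW]
  ring

lemma deriv_twW (x : ℝ) :
    deriv (twW ν b) x = waveK ν b * (1 - 2 * twProfile ν b x) * twW ν b x :=
  (hasDerivAt_twW ν b x).deriv

lemma continuous_twW : Continuous (twW ν b) :=
  continuous_iff_continuousAt.2 fun x => (hasDerivAt_twW ν b x).continuousAt

lemma twProfile_pos (x : ℝ) : 0 < twProfile ν b x := by
  rw [twProfile]
  positivity

lemma twProfile_lt_one (x : ℝ) : twProfile ν b x < 1 := by
  rw [twProfile]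
  exact inv_lt_one_of_one_lt₀ (by linarith [exp_pos (-waveK ν b * x)])

lemma twW_nonneg (x : ℝ) : 0 ≤ twW ν b x :=
  mul_nonneg (mul_nonneg (waveK_nonneg ν b) (twProfile_pos ν b x).le)
    (sub_nonneg.2 (twProfile_lt_one ν b x).le)

lemma twW_le (x : ℝ) : twW ν b x ≤ waveK ν b * exp (-waveK ν b * x) := by
  have hk := waveK_nonneg ν b
  have hE := exp_pos (-waveK ν b * x)
  have hden : 1 ≤ (1 + exp (-waveK ν b * x)) ^ 2 := one_le_pow₀ (by linarith)
  rw [twW_eq, div_le_iff₀ (by positivity)]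
  nlinarith [mul_nonneg hk hE.le]

lemma abs_deriv_twW_le (x : ℝ) : |deriv (twW ν b) x| ≤ waveK ν b * twW ν b x := by
  have hk := waveK_nonneg ν b
  have h1 : |1 - 2 * twProfile ν b x| ≤ 1 := by
    rw [abs_le]
    constructor <;> linarith [twProfile_pos ν b x, twProfile_lt_one ν b x]
  rw [deriv_twW, abs_mul, abs_mul, abs_of_nonneg hk, abs_of_nonneg (twW_nonneg ν b x)]
  nlinarith [mul_nonneg hk (twW_nonneg ν b x)]

lemma twW_sq_mul_cosh_le (x : ℝ) : twW ν b x ^ 2 * cosh (waveK ν b * x) ≤ waveK ν b ^ 2 := by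
  set k := waveK ν b
  set E := exp (-k * x) with hE
  have hE0 : 0 < E := exp_pos _
  have hcosh : cosh (k * x) = (E⁻¹ + E) / 2 := by
    rw [cosh_eq, hE, neg_mul, exp_neg, inv_inv]
  rw [twW_eq, hcosh, ← hE, div_pow, mul_pow, div_mul_eq_mul_div, div_le_iff₀ (by positivity)]
  field_simp
  nlinarith [sq_nonneg k, mul_nonneg (sq_nonneg k) hE0.le, pow_pos hE0 3, pow_pos hE0 4,
    mul_nonneg (sq_nonneg k) (pow_pos hE0 2).le]

end Profile

section Riccati

variable {ν b : ℝ}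

lemma waveK_pos (hν : 0 < ν) (hb : 0 < b) : 0 < waveK ν b := sqrt_pos.2 (by positivity)

-- Since `2 v - 1 = tanh (k x / 2)`, this is the double-angle formula for `coth`.
lemma two_mul_twProfile_sub_one_mul_logDerivSinh {x : ℝ} (hkx : waveK ν b * x ≠ 0) :
    2 * (2 * twProfile ν b x - 1) * logDerivSinh (waveK ν b) x
      = waveK ν b * (1 + (2 * twProfile ν b x - 1) ^ 2) := by
  have hs : sinh (waveK ν b * x) ≠ 0 := sinh_ne_zero.2 hkx
  rw [twProfile, logDerivSinh, cosh_eq]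
  rw [sinh_eq] at hs ⊢
  rw [neg_mul, exp_neg] at *
  set E := exp (waveK ν b * x)
  have hE0 : 0 < E := exp_pos _
  have hE1 : E ^ 2 - 1 ≠ 0 := by
    intro h
    apply hs
    field_simp
    linear_combination h
  field_simp
  ring

lemma hasDerivAt_twW_sq_mul_logDerivSinh (hk : 0 < waveK ν b) {x : ℝ} (hx : x ≠ 0) :
    HasDerivAt (fun y => twW ν b y ^ 2 * logDerivSinh (waveK ν b) y)
      (-(twW ν b x * logDerivSinh (waveK ν b) x) ^ 2 - deriv (twW ν b) x ^ 2) x := by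
  have hkx : waveK ν b * x ≠ 0 := mul_ne_zero hk.ne' hx
  refine (((hasDerivAt_twW ν b x).pow 2).mul (hasDerivAt_logDerivSinh hkx)).congr_deriv ?_
  rw [deriv_twW, Pi.pow_apply]
  linear_combination
    (-(twW ν b x) ^ 2 * waveK ν b) * two_mul_twProfile_sub_one_mul_logDerivSinh hkx

lemma twW_sq_mul_logDerivSinh_nonneg (hk : 0 < waveK ν b) {x : ℝ} (hx : 0 < x) :
    0 ≤ twW ν b x ^ 2 * logDerivSinh (waveK ν b) x := by
  have : 0 < sinh (waveK ν b * x) := sinh_pos_iff.2 (by positivity)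
  rw [logDerivSinh]
  positivity

lemma mul_twW_sq_mul_logDerivSinh_le (hk : 0 < waveK ν b) {x : ℝ} (hx : 0 < x) :
    x * (twW ν b x ^ 2 * logDerivSinh (waveK ν b) x) ≤ waveK ν b ^ 2 := by
  set k := waveK ν b
  have hs : 0 < sinh (k * x) := sinh_pos_iff.2 (by positivity)
  have hratio : k * x / sinh (k * x) ≤ 1 :=
    div_le_one_of_le₀ (self_le_sinh_iff.2 (by positivity)) hs.le
  calc x * (twW ν b x ^ 2 * logDerivSinh k x)
      = k * x / sinh (k * x) * (twW ν b x ^ 2 * cosh (k * x)) := by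
        rw [logDerivSinh]
        field_simp
    _ ≤ 1 * k ^ 2 := mul_le_mul hratio (twW_sq_mul_cosh_le ν b x) (by positivity) zero_le_one
    _ = k ^ 2 := one_mul _

lemma sq_mul_twW_sq_mul_logDerivSinh_le (hk : 0 < waveK ν b) {x y c : ℝ} (hx : 0 < x)
    (hy : |y| ≤ c) :
    y ^ 2 * (twW ν b x ^ 2 * logDerivSinh (waveK ν b) x) ≤ c ^ 2 * waveK ν b ^ 2 / x := by
  have hΦ := twW_sq_mul_logDerivSinh_nonneg hk hx
  have hy2 : y ^ 2 ≤ c ^ 2 := by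
    rw [← sq_abs]
    exact pow_le_pow_left₀ (abs_nonneg _) hy 2
  rw [le_div_iff₀ hx]
  calc y ^ 2 * (twW ν b x ^ 2 * logDerivSinh (waveK ν b) x) * x
      = y ^ 2 * (x * (twW ν b x ^ 2 * logDerivSinh (waveK ν b) x)) := by ring
    _ ≤ c ^ 2 * waveK ν b ^ 2 :=
        mul_le_mul hy2 (mul_twW_sq_mul_logDerivSinh_le hk hx) (mul_nonneg hx.le hΦ) (sq_nonneg c)

lemma tendsto_sq_mul_twW_sq_mul_logDerivSinh_nhdsGT (hk : 0 < waveK ν b) {h : ℝ → ℝ} {C : ℝ}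
    (hC : ∀ x ∈ Ioi (0 : ℝ), |h x| ≤ C * x) :
    Tendsto (fun x => h x ^ 2 * (twW ν b x ^ 2 * logDerivSinh (waveK ν b) x))
      (𝓝[>] 0) (𝓝 0) := by
  have hlin : Tendsto (fun x : ℝ => C ^ 2 * waveK ν b ^ 2 * x) (𝓝[>] 0) (𝓝 0) := by
    simpa using ((tendsto_id (x := 𝓝 (0 : ℝ))).const_mul (C ^ 2 * waveK ν b ^ 2)).mono_left
      nhdsWithin_le_nhds
  refine squeeze_zero' ?_ ?_ hlin <;> filter_upwards [self_mem_nhdsWithin] with x hx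
  · exact mul_nonneg (sq_nonneg _) (twW_sq_mul_logDerivSinh_nonneg hk hx)
  · convert sq_mul_twW_sq_mul_logDerivSinh_le hk hx (hC x hx) using 1
    field_simp [(mem_Ioi.1 hx).ne']

lemma tendsto_sq_mul_twW_sq_mul_logDerivSinh_atTop (hk : 0 < waveK ν b) {h : ℝ → ℝ} {C : ℝ}
    (hC : ∀ x ∈ Ioi (0 : ℝ), |h x| ≤ C) :
    Tendsto (fun x => h x ^ 2 * (twW ν b x ^ 2 * logDerivSinh (waveK ν b) x)) atTop (𝓝 0) := by
  refine squeeze_zero' (g := fun x => C ^ 2 * waveK ν b ^ 2 / x) ?_ ?_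
    (tendsto_const_nhds.div_atTop tendsto_id) <;>
    filter_upwards [eventually_gt_atTop 0] with x hx
  · exact mul_nonneg (sq_nonneg _) (twW_sq_mul_logDerivSinh_nonneg hk hx)
  · exact sq_mul_twW_sq_mul_logDerivSinh_le hk hx (hC x hx)

lemma integrableOn_twW_sq (hk : 0 < waveK ν b) :
    IntegrableOn (fun x => twW ν b x ^ 2) (Ioi 0) := by
  refine Integrable.mono'
    ((exp_neg_integrableOn_Ioi 0 (by positivity : 0 < 2 * waveK ν b)).const_mul (waveK ν b ^ 2))
    ((continuous_twW ν b).pow 2).aestronglyMeasurable (ae_of_all _ fun x => ?_)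
  rw [norm_pow, norm_eq_abs, sq_abs]
  calc twW ν b x ^ 2 ≤ (waveK ν b * exp (-waveK ν b * x)) ^ 2 :=
        pow_le_pow_left₀ (twW_nonneg ν b x) (twW_le ν b x) 2
    _ = waveK ν b ^ 2 * exp (-(2 * waveK ν b) * x) := by
        rw [mul_pow, ← exp_nat_mul]
        ring_nf

lemma integrableOn_deriv_twW_sq (hk : 0 < waveK ν b) :
    IntegrableOn (fun x => deriv (twW ν b) x ^ 2) (Ioi 0) := by
  refine Integrable.mono' ((integrableOn_twW_sq hk).const_mul (waveK ν b ^ 2))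
    ((measurable_deriv _).pow_const 2).aestronglyMeasurable (ae_of_all _ fun x => ?_)
  rw [norm_pow, norm_eq_abs, ← mul_pow]
  exact pow_le_pow_left₀ (abs_nonneg _) (abs_deriv_twW_le ν b x) 2

end Riccati

theorem half_line_hardy_general
    (ν b : ℝ) (hν : 0 < ν) (hb : 0 < b)
    (h : ℝ → ℝ) (hh : ContDiffOn ℝ 1 h (Set.Ici 0))
    (hbdd : ∃ M : ℝ, ∀ x ∈ Set.Ici (0 : ℝ), |h x| ≤ M)
    (hbdd' : ∃ M : ℝ, ∀ x ∈ Set.Ici (0 : ℝ), |derivWithin h (Set.Ici 0) x| ≤ M)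
    (h0 : h 0 = 0) :
    ∫ x in Set.Ioi (0 : ℝ), (h x) ^ 2 * (deriv (twW ν b) x) ^ 2
    ≤ ∫ x in Set.Ioi (0 : ℝ), (derivWithin h (Set.Ici 0) x) ^ 2 * (twW ν b x) ^ 2 := by
  obtain ⟨M, hM⟩ := hbdd
  obtain ⟨M', hM'⟩ := hbdd'
  have hk := waveK_pos hν hb
  have hdiff : DifferentiableOn ℝ h (Ici 0) := hh.differentiableOn one_ne_zero
  have hderiv (x : ℝ) (hx : x ∈ Ioi 0) : HasDerivAt h (derivWithin h (Ici 0) x) x :=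
    (hdiff x (Ioi_subset_Ici_self hx)).hasDerivWithinAt.hasDerivAt (Ici_mem_nhds hx)
  have hlin (x : ℝ) (hx : x ∈ Ioi 0) : |h x| ≤ M' * x := by
    simpa [h0, abs_of_pos (mem_Ioi.1 hx)] using Convex.norm_image_sub_le_of_norm_derivWithin_le
      hdiff hM' (convex_Ici 0) self_mem_Ici (Ioi_subset_Ici_self hx)
  have hmeas {f : ℝ → ℝ} (hf : ContinuousOn f (Ici 0)) :
      AEStronglyMeasurable f (volume.restrict (Ioi 0)) :=
    (hf.mono Ioi_subset_Ici_self).aestronglyMeasurable measurableSet_Ioi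
  exact integral_sq_mul_sq_le_of_riccati hderiv
    (fun x hx => hasDerivAt_twW_sq_mul_logDerivSinh hk (ne_of_gt hx)) h0
    (tendsto_sq_mul_twW_sq_mul_logDerivSinh_nhdsGT hk hlin)
    (tendsto_sq_mul_twW_sq_mul_logDerivSinh_atTop hk fun x hx => hM x (Ioi_subset_Ici_self hx))
    (integrableOn_sq_mul_of_abs_le (integrableOn_deriv_twW_sq hk) measurableSet_Ioi
      (hmeas hh.continuousOn) fun x hx => hM x (Ioi_subset_Ici_self hx))
    (integrableOn_sq_mul_of_abs_le (integrableOn_twW_sq hk) measurableSet_Ioi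
      (hmeas (hh.continuousOn_derivWithin (uniqueDiffOn_Ici 0) le_rfl))
      fun x hx => hM' x (Ioi_subset_Ici_self hx))

/-- Lemma 4.5, Hardy-type inequality: for `h : [0,∞) → ℝ`
continuously differentiable with `h` and `h'` bounded and `h(0) = 0`,
`∫_0^∞ h² (w')² ≤ ∫_0^∞ (h')² w²`. -/
theorem half_line_hardy
    (ν b a : ℝ) (hν : 0 < ν) (hb : 0 < b) (ha : a ∈ Set.Ioo (0 : ℝ) 1)
    (h : ℝ → ℝ) (hh : ContDiffOn ℝ 1 h (Set.Ici 0))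
    (hbdd : ∃ M : ℝ, ∀ x ∈ Set.Ici (0 : ℝ), |h x| ≤ M)
    (hbdd' : ∃ M : ℝ, ∀ x ∈ Set.Ici (0 : ℝ), |derivWithin h (Set.Ici 0) x| ≤ M)
    (h0 : h 0 = 0) :
    ∫ x in Set.Ioi (0 : ℝ), (h x) ^ 2 * (deriv (twW ν b) x) ^ 2
    ≤ ∫ x in Set.Ioi (0 : ℝ), (derivWithin h (Set.Ici 0) x) ^ 2 * (twW ν b x) ^ 2 :=
  half_line_hardy_general ν b hν hb h hh hbdd hbdd' h0
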